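/- Let $f_1, f_2 : \mathbb{R}^2 \to \mathbb{C}$ be bounded measurable functions, let $\Omega_1 \subseteq [0,1]^2$ be measurable with $\Omega_2 = [0,1]^2 \setminus \Omega_1$, separated by a nonempty compact curve $\Gamma^* \subseteq [0,1]^2$, and let $f = f_1$ on $\Omega_1$ and $f = f_2$ on $\Omega_2$. Let $\Pi_1, \Pi_2$ be sets of continuous functions on $[0,1]^2$, and for a triple $(p_1,p_2,p) \in \Pi_1 \times \Pi_1 \times \Pi_2$ let $S(p_1,p_2,p)$ equal $p_1$ on $\{p \ge 0\} \cap [0,1]^2$ and $p_2$ on $\{p < 0\} \cap [0,1]^2$, let $\Gamma_0(p) = \{z \in [0,1]^2 : p(z) = 0\}$, and let $F(p_1,p_2,p) = \sum_{m,n=-M}^{M} |\hat f_{mn} - \widehat{S(p_1,p_2,p)}_{mn}|^2$. Assume: (i) there exists a triple $(\bar p_1, \bar p_2, \bar p)$ with $\sup_{[0,1]^2}|f_1 - \bar p_1| \le \varepsilon$, $\sup_{[0,1]^2}|f_2 - \bar p_2| \le \varepsilon$, $d_H(\Gamma^*, \Gamma_0(\bar p)) \le \delta$ with $\Gamma_0(\bar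 p)$ nonempty, and $|\hat f_{mn} - \widehat{S(\bar p_1,\bar p_2,\bar p)}_{mn}| \le \varepsilon + L\delta$ for all $-M \le m,n \le M$; (ii) (Lipschitz inverse) there is a constant $C \ge 0$ such that for all triples $(q_1,q_2,q)$ and $(r_1,r_2,r)$ in $\Pi_1 \times \Pi_1 \times \Pi_2$ and every $\eta \ge 0$, if $|\widehat{S(q_1,q_2,q)}_{mn} - \widehat{S(r_1,r_2,r)}_{mn}| \le \eta$ for all $-M \le m,n \le M$, then $\sup_{\{r \ge 0\} \cap [0,1]^2} |q_1 - r_1| \le C\eta$, $\sup_{\{r < 0\} \cap [0,1]^2} |q_2 - r_2| \le C\eta$, and $d_H(\Gamma_0(q), \Gamma_0(r)) \le C\eta$; (iii) $(p_1^*, p_2^*, p^*)$ minimizes $F$ over $\Pi_1 \times \Pi_1 \times \Pi_2$. Then, with $\Omega_1^* = \{p^* \ge 0\} \cap [0,1]^2$ and $\Omega_2^* = \{p^* < 0\} \cap [0,1]^2$: $\sup_{\Omega_1^*} |f_1 - p_1^*| \le \varepsilon + C(2M+2)(\varepsilon + L\delta)$, $\sup_{\Omega_2^*} |f_2 - p_2^*|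 \le \varepsilon + C(2M+2)(\varepsilon + L\delta)$, and $d_H(\Gamma^*, \Gamma_0(p^*)) \le \delta + C(2M+2)(\varepsilon + L\delta)$. -/
import Mathlib


open MeasureTheory

/-- The unit square `[0,1]² ⊆ ℝ²`. -/
def unitSq : Set (ℝ × ℝ) := Set.Icc (0:ℝ) 1 ×ˢ Set.Icc (0:ℝ) 1

/-- The `(m,n)`-th Fourier coefficient of a function on `[0,1]²`:
`ĝ_{mn} = ∫₀¹ ∫₀¹ g(x,y) e^{-2πi(mx+ny)} dx dy`. -/
noncomputable def fourierCoeff2 (g : ℝ × ℝ → ℂ) (m n : ℤ) : ℂ :=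
  ∫ x in (0:ℝ)..1, ∫ y in (0:ℝ)..1,
    g (x, y) * Complex.exp (-(2 * Real.pi * Complex.I * ((m : ℂ) * (x : ℂ) + (n : ℂ) * (y : ℂ))))

/-- The piecewise function `S(p₁,p₂,p)` determined by a triple: it equals `p₁` where `p ≥ 0`
and `p₂` where `p < 0`. -/
noncomputable def pieceS (p1 p2 : ℝ × ℝ → ℂ) (p : ℝ × ℝ → ℝ) : ℝ × ℝ → ℂ :=
  fun z => if 0 ≤ p z then p1 z else p2 z

/-- The zero level set `Γ₀(p) = {z ∈ [0,1]² : p(z) = 0}`. -/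
def levelZero (p : ℝ × ℝ → ℝ) : Set (ℝ × ℝ) := {z ∈ unitSq | p z = 0}

/-- The least-squares Fourier mismatch objective
`F(p₁,p₂,p) = ∑_{m,n=-M}^{M} |f̂_{mn} - Ŝ(p₁,p₂,p)_{mn}|²`. -/
noncomputable def lsObj (f : ℝ × ℝ → ℂ) (M : ℕ)
    (p1 p2 : ℝ × ℝ → ℂ) (p : ℝ × ℝ → ℝ) : ℝ :=
  ∑ m ∈ Finset.Icc (-(M : ℤ)) (M : ℤ), ∑ n ∈ Finset.Icc (-(M : ℤ)) (M : ℤ),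
    ‖fourierCoeff2 f m n - fourierCoeff2 (pieceS p1 p2 p) m n‖ ^ 2

set_option maxHeartbeats 1000000 in
/-- Error bounds for the Fourier–Padé reconstruction of a piecewise-smooth bivariate function:
if some triple `(p̄₁,p̄₂,p̄)` approximates `(f₁,f₂,Γ⋆)` within `(ε,ε,δ)` and matches the Fourier
data within `ε + Lδ`, and the Fourier data determines triples in a Lipschitz way (constant `C`),
then the least-squares minimizing triple `(p₁⋆,p₂⋆,p⋆)` satisfies
`‖f₁ - p₁⋆‖_{∞,Ω₁⋆}, ‖f₂ - p₂⋆‖_{∞,Ω₂⋆} ≤ ε + C(2M+2)(ε+Lδ)` and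
`d_H(Γ⋆, Γ₀(p⋆)) ≤ δ + C(2M+2)(ε+Lδ)`. -/
theorem stmt0
    (f1 f2 : ℝ × ℝ → ℂ) (hf1m : Measurable f1) (hf2m : Measurable f2)
    (B : ℝ) (hf1b : ∀ z, ‖f1 z‖ ≤ B) (hf2b : ∀ z, ‖f2 z‖ ≤ B)
    (Ω₁ : Set (ℝ × ℝ)) (hΩ₁m : MeasurableSet Ω₁) (hΩ₁sub : Ω₁ ⊆ unitSq)
    (Ω₂ : Set (ℝ × ℝ)) (hΩ₂ : Ω₂ = unitSq \ Ω₁)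
    (Γstar : Set (ℝ × ℝ)) (hΓc : IsCompact Γstar) (hΓne : Γstar.Nonempty)
    (hΓsub : Γstar ⊆ unitSq)
    (f : ℝ × ℝ → ℂ) (hfeq1 : ∀ z ∈ Ω₁, f z = f1 z) (hfeq2 : ∀ z ∈ Ω₂, f z = f2 z)
    (Pi1 : Set (ℝ × ℝ → ℂ)) (Pi2 : Set (ℝ × ℝ → ℝ))
    (hPi1cont : ∀ q ∈ Pi1, ContinuousOn q unitSq)
    (hPi2cont : ∀ q ∈ Pi2, ContinuousOn q unitSq)
    (M : ℕ) (ε δ L : ℝ) (hε : 0 ≤ ε) (hδ : 0 ≤ δ) (hL : 0 ≤ L)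
    -- (i) existence of a good triple
    (pbar1 pbar2 : ℝ × ℝ → ℂ) (pbar : ℝ × ℝ → ℝ)
    (hpbar1 : pbar1 ∈ Pi1) (hpbar2 : pbar2 ∈ Pi1) (hpbar : pbar ∈ Pi2)
    (happ1 : ∀ z ∈ unitSq, ‖f1 z - pbar1 z‖ ≤ ε)
    (happ2 : ∀ z ∈ unitSq, ‖f2 z - pbar2 z‖ ≤ ε)
    (hΓ0ne : (levelZero pbar).Nonempty)
    (hΓapp : Metric.hausdorffDist Γstar (levelZero pbar) ≤ δ)
    (hFou : ∀ m n : ℤ, -(M : ℤ) ≤ m → m ≤ M → -(M : ℤ) ≤ n → n ≤ M →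
      ‖fourierCoeff2 f m n - fourierCoeff2 (pieceS pbar1 pbar2 pbar) m n‖ ≤ ε + L * δ)
    -- (ii) Lipschitz continuous inverse mapping on Fourier data
    (C : ℝ) (hC : 0 ≤ C)
    (hinv : ∀ q1 ∈ Pi1, ∀ q2 ∈ Pi1, ∀ q ∈ Pi2, ∀ r1 ∈ Pi1, ∀ r2 ∈ Pi1, ∀ r ∈ Pi2,
      ∀ η : ℝ, 0 ≤ η →
      (∀ m n : ℤ, -(M : ℤ) ≤ m → m ≤ M → -(M : ℤ) ≤ n → n ≤ M →
        ‖fourierCoeff2 (pieceS q1 q2 q) m n - fourierCoeff2 (pieceS r1 r2 r) m n‖ ≤ η) →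
      (∀ z ∈ {z ∈ unitSq | 0 ≤ r z}, ‖q1 z - r1 z‖ ≤ C * η) ∧
      (∀ z ∈ {z ∈ unitSq | r z < 0}, ‖q2 z - r2 z‖ ≤ C * η) ∧
      Metric.hausdorffDist (levelZero q) (levelZero r) ≤ C * η)
    -- (iii) the minimizing triple
    (ps1 ps2 : ℝ × ℝ → ℂ) (ps : ℝ × ℝ → ℝ)
    (hps1 : ps1 ∈ Pi1) (hps2 : ps2 ∈ Pi1) (hps : ps ∈ Pi2)
    (hmin : ∀ q1 ∈ Pi1, ∀ q2 ∈ Pi1, ∀ q ∈ Pi2,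
      lsObj f M ps1 ps2 ps ≤ lsObj f M q1 q2 q) :
    (∀ z ∈ {z ∈ unitSq | 0 ≤ ps z},
      ‖f1 z - ps1 z‖ ≤ ε + C * (2 * (M : ℝ) + 2) * (ε + L * δ)) ∧
    (∀ z ∈ {z ∈ unitSq | ps z < 0},
      ‖f2 z - ps2 z‖ ≤ ε + C * (2 * (M : ℝ) + 2) * (ε + L * δ)) ∧
    Metric.hausdorffDist Γstar (levelZero ps) ≤ δ + C * (2 * (M : ℝ) + 2) * (ε + L * δ) := by

  have hE0 : 0 ≤ ε + L * δ := by positivity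
  set E := ε + L * δ with hEdef
  have hcard : (Finset.Icc (-(M:ℤ)) (M:ℤ)).card = 2*M+1 := by
    rw [Int.card_Icc]; omega
  have hbar_le : lsObj f M pbar1 pbar2 pbar ≤ (2*(M:ℝ)+1)^2 * E^2 := by
    unfold lsObj
    calc ∑ m ∈ Finset.Icc (-(M:ℤ)) (M:ℤ), ∑ n ∈ Finset.Icc (-(M:ℤ)) (M:ℤ),
          ‖fourierCoeff2 f m n - fourierCoeff2 (pieceS pbar1 pbar2 pbar) m n‖ ^ 2
        ≤ ∑ m ∈ Finset.Icc (-(M:ℤ)) (M:ℤ), ∑ n ∈ Finset.Icc (-(M:ℤ)) (M:ℤ), E^2 := by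
          apply Finset.sum_le_sum; intro m hm
          apply Finset.sum_le_sum; intro n hn
          rw [Finset.mem_Icc] at hm hn
          exact pow_le_pow_left₀ (norm_nonneg _) (hFou m n hm.1 hm.2 hn.1 hn.2) 2
      _ = (2*(M:ℝ)+1)^2 * E^2 := by
          simp only [Finset.sum_const, hcard, nsmul_eq_mul]
          push_cast; ring
  have hterm : ∀ m n : ℤ, -(M:ℤ) ≤ m → m ≤ M → -(M:ℤ) ≤ n → n ≤ M →
      ‖fourierCoeff2 f m n - fourierCoeff2 (pieceS ps1 ps2 ps) m n‖ ≤ (2*(M:ℝ)+1)*E := by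
    intro m n h1 h2 h3 h4
    have hmm : m ∈ Finset.Icc (-(M:ℤ)) (M:ℤ) := Finset.mem_Icc.mpr ⟨h1, h2⟩
    have hnm : n ∈ Finset.Icc (-(M:ℤ)) (M:ℤ) := Finset.mem_Icc.mpr ⟨h3, h4⟩
    have hsingle : ‖fourierCoeff2 f m n - fourierCoeff2 (pieceS ps1 ps2 ps) m n‖ ^ 2
        ≤ lsObj f M ps1 ps2 ps := by
      unfold lsObj
      calc ‖fourierCoeff2 f m n - fourierCoeff2 (pieceS ps1 ps2 ps) m n‖ ^ 2
          ≤ ∑ j ∈ Finset.Icc (-(M:ℤ)) (M:ℤ),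
              ‖fourierCoeff2 f m j - fourierCoeff2 (pieceS ps1 ps2 ps) m j‖ ^ 2 :=
            Finset.single_le_sum (f := fun j => ‖fourierCoeff2 f m j - fourierCoeff2 (pieceS ps1 ps2 ps) m j‖ ^ 2) (fun i _ => sq_nonneg _) hnm
        _ ≤ ∑ i ∈ Finset.Icc (-(M:ℤ)) (M:ℤ), ∑ j ∈ Finset.Icc (-(M:ℤ)) (M:ℤ),
              ‖fourierCoeff2 f i j - fourierCoeff2 (pieceS ps1 ps2 ps) i j‖ ^ 2 :=
            Finset.single_le_sum (f := fun i => ∑ j ∈ Finset.Icc (-(M:ℤ)) (M:ℤ),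
              ‖fourierCoeff2 f i j - fourierCoeff2 (pieceS ps1 ps2 ps) i j‖ ^ 2)
              (fun i _ => Finset.sum_nonneg fun j _ => sq_nonneg _) hmm
    have hsq : ‖fourierCoeff2 f m n - fourierCoeff2 (pieceS ps1 ps2 ps) m n‖ ^ 2
        ≤ ((2*(M:ℝ)+1)*E)^2 := by
      have := hsingle.trans ((hmin pbar1 hpbar1 pbar2 hpbar2 pbar hpbar).trans hbar_le)
      nlinarith [this]
    have hb : (0:ℝ) ≤ (2*(M:ℝ)+1)*E := by positivity
    nlinarith [norm_nonneg (fourierCoeff2 f m n - fourierCoeff2 (pieceS ps1 ps2 ps) m n), hsq, hb]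
  set η := (2*(M:ℝ)+2)*E with hηdef
  have hη0 : 0 ≤ η := by positivity
  have hqr : ∀ m n : ℤ, -(M:ℤ) ≤ m → m ≤ M → -(M:ℤ) ≤ n → n ≤ M →
      ‖fourierCoeff2 (pieceS pbar1 pbar2 pbar) m n - fourierCoeff2 (pieceS ps1 ps2 ps) m n‖ ≤ η := by
    intro m n h1 h2 h3 h4
    have ht := dist_triangle (fourierCoeff2 (pieceS pbar1 pbar2 pbar) m n)
      (fourierCoeff2 f m n) (fourierCoeff2 (pieceS ps1 ps2 ps) m n)
    simp only [dist_eq_norm] at ht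
    have h5 : ‖fourierCoeff2 (pieceS pbar1 pbar2 pbar) m n - fourierCoeff2 f m n‖ ≤ E := by
      rw [norm_sub_rev]; exact hFou m n h1 h2 h3 h4
    have h6 := hterm m n h1 h2 h3 h4
    have : η = E + (2*(M:ℝ)+1)*E := by rw [hηdef]; ring
    linarith
  obtain ⟨h1, h2, h3⟩ := hinv pbar1 hpbar1 pbar2 hpbar2 pbar hpbar
    ps1 hps1 ps2 hps2 ps hps η hη0 hqr
  have hCη : C * η = C * (2 * (M:ℝ) + 2) * E := by rw [hηdef]; ring
  refine ⟨fun z hz => ?_, fun z hz => ?_, ?_⟩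
  · have h1z := h1 z hz
    have ha := happ1 z hz.1
    have ht := dist_triangle (f1 z) (pbar1 z) (ps1 z)
    simp only [dist_eq_norm] at ht
    linarith [hCη]
  · have h2z := h2 z hz
    have ha := happ2 z hz.1
    have ht := dist_triangle (f2 z) (pbar2 z) (ps2 z)
    simp only [dist_eq_norm] at ht
    linarith [hCη]
  · rcases Set.eq_empty_or_nonempty (levelZero ps) with he | hne
    · rw [he, Metric.hausdorffDist_empty]
      positivity
    · have hbdd : Bornology.IsBounded unitSq :=
        (Metric.isBounded_Icc (0:ℝ) 1).prod (Metric.isBounded_Icc (0:ℝ) 1)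
      have hfin : EMetric.hausdorffEdist Γstar (levelZero pbar) ≠ ⊤ :=
        Metric.hausdorffEdist_ne_top_of_nonempty_of_bounded hΓne hΓ0ne
          (hbdd.subset hΓsub) (hbdd.subset (fun z hz => hz.1))
      have ht := Metric.hausdorffDist_triangle (u := levelZero ps) hfin
      linarith [hCη]
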